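/- Let G = ⊕_p ℤ_(p) be the direct sum, over all prime numbers p, of the localizations ℤ_(p) of ℤ at p (viewed as subrings of ℚ consisting of fractions with denominator prime to p). Then for every prime l and every r ≥ 1, the quotient G/l^r G is a cyclic group of order l^r, and consequently the l-adic completion G^{∧l} = lim_r G/l^r G is isomorphic, as an additive group, to the group ℤ_l of l-adic integers. -/

import Mathlib

/-- The localization `ℤ_(p)` of `ℤ` at a prime `p`, viewed as the additive subgroup
of `ℚ` consisting of fractions whose denominator is prime to `p`. -/
def primeLocal (p : Nat.Primes) : AddSubgroup ℚ where
  carrier := {q | ¬ (p : ℕ) ∣ q.den}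
  zero_mem' := by
    simp only [Set.mem_setOf_eq, Rat.den_zero, Nat.dvd_one]
    exact p.prop.ne_one
  add_mem' := by
    intro a b ha hb h
    rcases p.prop.dvd_mul.mp (dvd_trans h (Rat.add_den_dvd a b)) with h' | h'
    · exact ha h'
    · exact hb h'
  neg_mem' := by
    intro a ha
    simpa only [Set.mem_setOf_eq, Rat.den_neg_eq_den] using ha

/-- The group `G = ⊕_p ℤ_(p)`, the direct sum over all primes of the localizations
of `ℤ` at `p`. -/
abbrev sumOfLocalizations : Type :=
  DirectSum Nat.Primes fun p => primeLocal p

/-- The subgroup `n·G` of an abelian group `G`, the range of multiplication by `n`. -/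
def smulRange (G : Type*) [AddCommGroup G] (n : ℕ) : AddSubgroup G :=
  (smulAddHom ℕ G n).range

/-- The natural projection `G/l^(r+1)G → G/l^r G`. -/
def transitionMap (G : Type*) [AddCommGroup G] (l r : ℕ) :
    G ⧸ smulRange G (l ^ (r + 1)) →+ G ⧸ smulRange G (l ^ r) :=
  QuotientAddGroup.map _ _ (AddMonoidHom.id G) (by
    rintro x ⟨y, rfl⟩
    exact ⟨l • y, by simp [smulAddHom_apply, pow_succ, mul_smul]⟩)

/-- The `l`-adic completion `G^{∧l} = lim_r G/l^r G` of an abelian group `G`,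
realized as the group of compatible sequences in `∏_r G/l^r G`. -/
def adicCompletion (G : Type*) [AddCommGroup G] (l : ℕ) :
    AddSubgroup (∀ r : ℕ, G ⧸ smulRange G (l ^ r)) where
  carrier := {a | ∀ r : ℕ, transitionMap G l r (a (r + 1)) = a r}
  zero_mem' := fun r => by simp
  add_mem' := by
    intro a b ha hb r
    simp only [Pi.add_apply, map_add, ha r, hb r]
  neg_mem' := by
    intro a ha r
    simp only [Pi.neg_apply, map_neg, ha r]

/-!
Projecting `G = ⊕_p ℤ_(p)` to its `l`-component and embedding `ℤ_(l)` in `ℤ_l` gives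
`ψ : G →+ ℤ_l`. Its reduction `G → ℤ/l^r` is onto because `ψ` hits `1`, and its kernel is
`l^r G`: for `p ≠ l` the group `ℤ_(p)` is `l`-divisible, and an element of `ℤ_(l)` that
`l^r` divides in `ℤ_l` has its quotient by `l^r` in `ℤ_(l)` again, since `ℤ_(l) = ℚ ∩ ℤ_l`.
Hence `G/l^r G ≅ ℤ/l^r` compatibly in `r`, and the limit is `lim ℤ/l^r = ℤ_l`.
-/

open PadicInt DirectSum

theorem mem_smulRange_iff {G : Type*} [AddCommGroup G] {n : ℕ} {x : G} :
    x ∈ smulRange G n ↔ ∃ y : G, n • y = x :=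
  Iff.rfl

theorem DirectSum.mem_smulRange_of_forall_mem {ι : Type*} [DecidableEq ι] {A : ι → Type*}
    [∀ i, AddCommGroup (A i)] {n : ℕ} {g : ⨁ i, A i} (hg : ∀ i, g i ∈ smulRange (A i) n) :
    g ∈ smulRange (⨁ i, A i) n := by
  classical
  rw [← DirectSum.sum_support_of g]
  refine AddSubgroup.sum_mem _ fun i _ => ?_
  obtain ⟨y, hy⟩ := mem_smulRange_iff.1 (hg i)
  exact mem_smulRange_iff.2 ⟨DirectSum.of A i y, by rw [← map_nsmul, hy]⟩

theorem PadicInt.exists_toZModPow_eq {p : ℕ} [Fact p.Prime] (b : ∀ n, ZMod (p ^ n))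
    (hb : ∀ n, ZMod.cast (b (n + 1)) = b n) : ∃ x : ℤ_[p], ∀ n, toZModPow n x = b n := by
  have hdvd : ∀ n, (p : ℤ) ^ n ∣ ((b (n + 1)).val : ℤ) - (b n).val := by
    intro n
    rw [← Nat.cast_pow, ← ZMod.intCast_eq_intCast_iff_dvd_sub]
    simp [hb]
  exact ⟨_, fun n =>
    (toZModPow_ofIntSeq_of_pow_dvd_sub (fun i => ((b i).val : ℤ)) p hdvd n).trans (by simp)⟩

-- An inline `⟨p, _⟩` elaborates at the subtype underlying `Nat.Primes`, which blocks `rw`/`simp`.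
def Nat.Primes.ofFact (p : ℕ) [Fact p.Prime] : Nat.Primes :=
  ⟨p, Fact.out⟩

theorem mem_primeLocal_iff_norm_le_one {p : ℕ} [Fact p.Prime] (q : ℚ) :
    q ∈ primeLocal (.ofFact p) ↔ ‖(q : ℚ_[p])‖ ≤ 1 := by
  rw [Padic.norm_rat_le_one_iff_padicValuation_le_one, Rat.padicValuation_le_one_iff]
  rfl

theorem mem_smulRange_primeLocal_of_not_dvd {p : Nat.Primes} {n : ℕ} (hn : ¬ (p : ℕ) ∣ n)
    (x : primeLocal p) : x ∈ smulRange (primeLocal p) n := by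
  have hn0 : n ≠ 0 := fun h => hn (h ▸ dvd_zero _)
  have hden : ((x : ℚ) * (n : ℚ)⁻¹).den ∣ (x : ℚ).den * n := by
    simpa [Rat.inv_natCast_den, hn0] using Rat.mul_den_dvd (x : ℚ) (n : ℚ)⁻¹
  have hmem : (x : ℚ) * (n : ℚ)⁻¹ ∈ primeLocal p := fun hp =>
    (p.prop.dvd_mul.1 (hp.trans hden)).elim x.prop hn
  refine mem_smulRange_iff.2 ⟨⟨_, hmem⟩, Subtype.ext ?_⟩
  simp only [AddSubgroup.coe_nsmul, nsmul_eq_mul]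
  field_simp

section HomToPadicInt

variable {G : Type*} [AddCommGroup G] {l : ℕ} [Fact l.Prime]

noncomputable def toZModPowHom (ψ : G →+ ℤ_[l]) (r : ℕ) : G →+ ZMod (l ^ r) :=
  (toZModPow r).toAddMonoidHom.comp ψ

variable {ψ : G →+ ℤ_[l]}

theorem ker_toZModPowHom
    (hψ : ∀ r g, toZModPow r (ψ g) = 0 → g ∈ smulRange G (l ^ r)) (r : ℕ) :
    (toZModPowHom ψ r).ker = smulRange G (l ^ r) := by
  refine le_antisymm (fun g hg => hψ r g hg) ?_
  rintro _ ⟨y, rfl⟩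
  rw [AddMonoidHom.mem_ker, toZModPowHom, AddMonoidHom.comp_apply, smulAddHom_apply, map_nsmul,
    map_nsmul, nsmul_eq_mul, ZMod.natCast_self, zero_mul]

theorem toZModPowHom_surjective (h1 : 1 ∈ ψ.range) (r : ℕ) :
    Function.Surjective (toZModPowHom ψ r) := by
  obtain ⟨g, hg⟩ := h1
  intro z
  refine ⟨z.val • g, ?_⟩
  simp [toZModPowHom, hg]

variable (h1 : 1 ∈ ψ.range) (hψ : ∀ r g, toZModPow r (ψ g) = 0 → g ∈ smulRange G (l ^ r))

noncomputable def quotientSmulRangeEquiv (r : ℕ) : G ⧸ smulRange G (l ^ r) ≃+ ZMod (l ^ r) :=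
  (QuotientAddGroup.quotientAddEquivOfEq (ker_toZModPowHom hψ r).symm).trans
    (QuotientAddGroup.quotientKerEquivOfSurjective _ (toZModPowHom_surjective h1 r))

theorem quotientSmulRangeEquiv_mk (r : ℕ) (g : G) :
    quotientSmulRangeEquiv h1 hψ r g = toZModPow r (ψ g) :=
  rfl

theorem quotientSmulRangeEquiv_transitionMap (r : ℕ) (z : G ⧸ smulRange G (l ^ (r + 1))) :
    quotientSmulRangeEquiv h1 hψ r (transitionMap G l r z) =
      ZMod.cast (quotientSmulRangeEquiv h1 hψ (r + 1) z) := by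
  obtain ⟨g, rfl⟩ := QuotientAddGroup.mk_surjective z
  simp [transitionMap, quotientSmulRangeEquiv_mk]

noncomputable def padicIntToAdicCompletion : ℤ_[l] →+ adicCompletion G l where
  toFun x := ⟨fun r => (quotientSmulRangeEquiv h1 hψ r).symm (toZModPow r x), fun r => by
    apply (quotientSmulRangeEquiv h1 hψ r).injective
    simp [quotientSmulRangeEquiv_transitionMap]⟩
  map_zero' := by ext; simp
  map_add' x y := by ext; simp

theorem padicIntToAdicCompletion_bijective :
    Function.Bijective (padicIntToAdicCompletion h1 hψ) := by
  refine ⟨fun x y hxy => ext_of_toZModPow.1 fun r => ?_, fun a => ?_⟩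
  · exact (quotientSmulRangeEquiv h1 hψ r).symm.injective (congrFun (congrArg Subtype.val hxy) r)
  · obtain ⟨x, hx⟩ := exists_toZModPow_eq (fun r => quotientSmulRangeEquiv h1 hψ r (a.1 r))
      fun r => by rw [← quotientSmulRangeEquiv_transitionMap, a.2 r]
    exact ⟨x, Subtype.ext <| funext fun r => by simp [padicIntToAdicCompletion, hx]⟩

noncomputable def adicCompletionEquivPadicInt : adicCompletion G l ≃+ ℤ_[l] :=
  (AddEquiv.ofBijective _ (padicIntToAdicCompletion_bijective h1 hψ)).symm

end HomToPadicInt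

section SumOfLocalizations

variable {l : ℕ} [Fact l.Prime]

variable (l) in
noncomputable def primeLocalToPadicInt : primeLocal (.ofFact l) →+ ℤ_[l] where
  toFun q := ⟨q, (mem_primeLocal_iff_norm_le_one (q : ℚ)).1 q.2⟩
  map_zero' := PadicInt.ext (by simp)
  map_add' a b := PadicInt.ext (Rat.cast_add (a : ℚ) b)

@[simp]
theorem coe_primeLocalToPadicInt (q : primeLocal (.ofFact l)) :
    (primeLocalToPadicInt l q : ℚ_[l]) = (q : ℚ) :=
  rfl

theorem mem_smulRange_primeLocal_of_toZModPow_eq_zero {r : ℕ} {x : primeLocal (.ofFact l)}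
    (hx : toZModPow r (primeLocalToPadicInt l x) = 0) :
    x ∈ smulRange (primeLocal (.ofFact l)) (l ^ r) := by
  rw [← RingHom.mem_ker, ker_toZModPow, Ideal.mem_span_singleton'] at hx
  obtain ⟨z, hz⟩ := hx
  have hlr : (l : ℚ) ^ r ≠ 0 := pow_ne_zero r (Nat.cast_ne_zero.2 (Fact.out : l.Prime).ne_zero)
  have hcast : (((x : ℚ) / (l : ℚ) ^ r : ℚ) : ℚ_[l]) = z := by
    have hl0 : (l : ℚ_[l]) ≠ 0 := Nat.cast_ne_zero.2 (Fact.out : l.Prime).ne_zero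
    have hz' := congrArg ((↑) : ℤ_[l] → ℚ_[l]) hz
    push_cast at hz' ⊢
    rw [← coe_primeLocalToPadicInt, ← hz']
    field_simp
  have hmem : (x : ℚ) / (l : ℚ) ^ r ∈ primeLocal (.ofFact l) := by
    rw [mem_primeLocal_iff_norm_le_one, hcast]
    exact z.norm_le_one
  refine mem_smulRange_iff.2 ⟨⟨_, hmem⟩, Subtype.ext ?_⟩
  simp only [AddSubgroup.coe_nsmul, nsmul_eq_mul]
  push_cast
  field_simp

variable (l) in
noncomputable def sumOfLocalizationsToPadicInt : sumOfLocalizations →+ ℤ_[l] :=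
  (primeLocalToPadicInt l).comp (DFinsupp.evalAddMonoidHom _)

theorem sumOfLocalizationsToPadicInt_apply (g : sumOfLocalizations) :
    sumOfLocalizationsToPadicInt l g = primeLocalToPadicInt l (g (.ofFact l)) :=
  rfl

theorem one_mem_range_sumOfLocalizationsToPadicInt :
    1 ∈ (sumOfLocalizationsToPadicInt l).range := by
  have h1 : (1 : ℚ) ∈ primeLocal (.ofFact l) := by simp [mem_primeLocal_iff_norm_le_one]
  exact ⟨DirectSum.of _ (.ofFact l) ⟨1, h1⟩,
    PadicInt.ext (by simp [sumOfLocalizationsToPadicInt_apply])⟩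

theorem mem_smulRange_sumOfLocalizations_of_toZModPow_eq_zero {r : ℕ} {g : sumOfLocalizations}
    (hg : toZModPow r (sumOfLocalizationsToPadicInt l g) = 0) :
    g ∈ smulRange sumOfLocalizations (l ^ r) := by
  refine DirectSum.mem_smulRange_of_forall_mem fun p => ?_
  by_cases hp : p = .ofFact l
  · subst hp
    exact mem_smulRange_primeLocal_of_toZModPow_eq_zero hg
  · refine mem_smulRange_primeLocal_of_not_dvd (fun hdvd => hp ?_) _
    exact Subtype.ext <|
      (Nat.prime_dvd_prime_iff_eq p.prop (Nat.Primes.ofFact l).prop).1 (p.prop.dvd_of_dvd_pow hdvd)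

end SumOfLocalizations

/-- For `G = ⊕_p ℤ_(p)` and any prime `l`, the quotient `G/l^r G` is cyclic of order
`l^r` for every `r ≥ 1`, and consequently the `l`-adic completion of `G` is
isomorphic, as an additive group, to the `l`-adic integers `ℤ_l`. -/
theorem stmt_8 (l : ℕ) [hl : Fact l.Prime] :
    (∀ r : ℕ, 1 ≤ r →
      Nonempty ((sumOfLocalizations ⧸ smulRange sumOfLocalizations (l ^ r)) ≃+
        ZMod (l ^ r))) ∧
      Nonempty (adicCompletion sumOfLocalizations l ≃+ ℤ_[l]) :=
  ⟨fun r _ => ⟨quotientSmulRangeEquiv one_mem_range_sumOfLocalizationsToPadicInt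
      (fun _ _ => mem_smulRange_sumOfLocalizations_of_toZModPow_eq_zero) r⟩,
    ⟨adicCompletionEquivPadicInt one_mem_range_sumOfLocalizationsToPadicInt
      (fun _ _ => mem_smulRange_sumOfLocalizations_of_toZModPow_eq_zero)⟩⟩
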